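/- Let x be a real number with x > 1, for each positive integer n let r(n) be the unique positive real solution of t(e^t + x) = 2 n x log x, and set λ_0(n) = x e^{−r(n)}, a_0(n) = (1 + λ_0(n))²/(4 n λ_0(n) log x), χ(n) = log n/(n λ_0(n)). Define the third steepest-descent coefficient c_{30}(n) = Q_3(a_0(n), λ_0(n)) χ(n)³/(97200 (1 + 2 a_0(n))⁹), where Q_3(a, ξ) = P_{31}(ξ) + 27 a P_{32}(ξ) − 9 a² P_{33}(ξ) + 27 a³ P_{34}(ξ) − 432 a⁴ P_{35}(ξ) + 4320 a⁵ P_{36}(ξ) with P_{31}(ξ) = 139 + 417ξ + 402ξ² + 109ξ³ + 402ξ⁴ + 417ξ⁵ + 139ξ⁶, P_{32}(ξ) = 151 + 378ξ + 308ξ² + 56ξ³ + 308ξ⁴ + 378ξ⁵ + 151ξ⁶, P_{33}(ξ) = 9271 − 3497ξ − 10867ξ² + 766ξ³ − 10867ξ⁴ − 3497ξ⁵ + 9271ξ⁶, P_{34}(ξ) = 7349 − 48668ξ + 45007ξ² − 24056ξ³ + 45007ξ⁴ − 48668ξ⁵ + 7349ξ⁶, P_{35}(ξ) = 203 − 5016ξ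 + 18729ξ² − 24392ξ³ + 18729ξ⁴ − 5016ξ⁵ + 203ξ⁶, P_{36}(ξ) = 1 − 120ξ + 1191ξ² − 2416ξ³ + 1191ξ⁴ − 120ξ⁵ + ξ⁶. Then c_{30}(n) → (139/12150) (log x)³ as n → ∞. -/

import Mathlib

/-!
Put `λ = x e^{-r}`. The equation `r (e^r + x) = 2 n x log x` then reads
`n λ = r (1 + λ) / (2 log x)` and `log n = r + log r + log (1 + λ) - log (2 x log x)`.
Its root `r` tends to infinity with `n`, so `λ → 0` and `n λ → ∞`, whence `a₀ → 0`, while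
`χ = log n / (n λ) → 2 log x`. As `Q₃` is continuous with `Q₃(0, 0) = 139`, the coefficient `c₃₀`
tends to `139 (2 log x)³ / 97200 = (139 / 12150) (log x)³`.
-/

open Filter

/-- `P₃₁(ξ) = 139 + 417ξ + 402ξ² + 109ξ³ + 402ξ⁴ + 417ξ⁵ + 139ξ⁶`. -/
def P31 (ξ : ℝ) : ℝ :=
  139 + 417 * ξ + 402 * ξ ^ 2 + 109 * ξ ^ 3 + 402 * ξ ^ 4 + 417 * ξ ^ 5 + 139 * ξ ^ 6

/-- `P₃₂(ξ) = 151 + 378ξ + 308ξ² + 56ξ³ + 308ξ⁴ + 378ξ⁵ + 151ξ⁶`. -/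
def P32 (ξ : ℝ) : ℝ :=
  151 + 378 * ξ + 308 * ξ ^ 2 + 56 * ξ ^ 3 + 308 * ξ ^ 4 + 378 * ξ ^ 5 + 151 * ξ ^ 6

/-- `P₃₃(ξ) = 9271 − 3497ξ − 10867ξ² + 766ξ³ − 10867ξ⁴ − 3497ξ⁵ + 9271ξ⁶`. -/
def P33 (ξ : ℝ) : ℝ :=
  9271 - 3497 * ξ - 10867 * ξ ^ 2 + 766 * ξ ^ 3 - 10867 * ξ ^ 4 - 3497 * ξ ^ 5 + 9271 * ξ ^ 6

/-- `P₃₄(ξ) = 7349 − 48668ξ + 45007ξ² − 24056ξ³ + 45007ξ⁴ − 48668ξ⁵ + 7349ξ⁶`. -/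
def P34 (ξ : ℝ) : ℝ :=
  7349 - 48668 * ξ + 45007 * ξ ^ 2 - 24056 * ξ ^ 3 + 45007 * ξ ^ 4 - 48668 * ξ ^ 5 +
    7349 * ξ ^ 6

/-- `P₃₅(ξ) = 203 − 5016ξ + 18729ξ² − 24392ξ³ + 18729ξ⁴ − 5016ξ⁵ + 203ξ⁶`. -/
def P35 (ξ : ℝ) : ℝ :=
  203 - 5016 * ξ + 18729 * ξ ^ 2 - 24392 * ξ ^ 3 + 18729 * ξ ^ 4 - 5016 * ξ ^ 5 + 203 * ξ ^ 6

/-- `P₃₆(ξ) = 1 − 120ξ + 1191ξ² − 2416ξ³ + 1191ξ⁴ − 120ξ⁵ + ξ⁶`. -/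
def P36 (ξ : ℝ) : ℝ :=
  1 - 120 * ξ + 1191 * ξ ^ 2 - 2416 * ξ ^ 3 + 1191 * ξ ^ 4 - 120 * ξ ^ 5 + ξ ^ 6

/-- `Q₃(a, ξ) = P₃₁(ξ) + 27 a P₃₂(ξ) − 9 a² P₃₃(ξ) + 27 a³ P₃₄(ξ) − 432 a⁴ P₃₅(ξ) + 4320 a⁵ P₃₆(ξ)`. -/
def Q3 (a ξ : ℝ) : ℝ :=
  P31 ξ + 27 * a * P32 ξ - 9 * a ^ 2 * P33 ξ + 27 * a ^ 3 * P34 ξ - 432 * a ^ 4 * P35 ξ +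
    4320 * a ^ 5 * P36 ξ

open Real Topology

lemma tendsto_atTop_of_tendsto_mul_exp_add {α : Type*} {l : Filter α} {r : α → ℝ} {x : ℝ}
    (hx : 0 ≤ x) (h : Tendsto (fun n => r n * (exp (r n) + x)) l atTop) :
    Tendsto r l atTop := by
  rw [tendsto_atTop]
  intro M
  set M' := max M 0
  filter_upwards [h.eventually_gt_atTop (M' * (exp M' + x))] with n hn
  by_contra! hlt
  have hle : r n ≤ M' := hlt.le.trans (le_max_left _ _)
  have hM' : 0 ≤ M' := le_max_right _ _
  have hexp : exp (r n) ≤ exp M' := exp_le_exp.2 hle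
  have hbound : r n * (exp (r n) + x) ≤ M' * (exp M' + x) := by
    rcases le_or_gt (r n) 0 with hneg | hpos
    · exact (mul_nonpos_of_nonpos_of_nonneg hneg (by positivity)).trans (by positivity)
    · exact mul_le_mul hle (by linarith) (by positivity) hM'
  linarith

lemma tendsto_log_add_self_add_div_self {α : Type*} {l : Filter α} {r u : α → ℝ} {u₀ : ℝ}
    (hr : Tendsto r l atTop) (hu : Tendsto u l (𝓝 u₀)) :
    Tendsto (fun n => (log (r n) + r n + u n) / r n) l (𝓝 1) := by
  have hlog : Tendsto (fun n => log (r n) / r n) l (𝓝 0) :=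
    isLittleO_log_id_atTop.tendsto_div_nhds_zero.comp hr
  have hsum : Tendsto (fun n => log (r n) / r n + 1 + u n / r n) l (𝓝 (0 + 1 + 0)) :=
    (hlog.add tendsto_const_nhds).add (hu.div_atTop hr)
  rw [zero_add, add_zero] at hsum
  refine hsum.congr' ?_
  filter_upwards [hr.eventually_gt_atTop 0] with n hn
  field_simp

lemma tendsto_one_add_mul_exp_neg {α : Type*} {l : Filter α} {r : α → ℝ} (x : ℝ)
    (hr : Tendsto r l atTop) : Tendsto (fun n => 1 + x * exp (-r n)) l (𝓝 1) := by
  simpa using ((tendsto_exp_neg_atTop_nhds_zero.comp hr).const_mul x).const_add 1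

lemma continuous_Q3 : Continuous fun p : ℝ × ℝ => Q3 p.1 p.2 := by
  unfold Q3 P31 P32 P33 P34 P35 P36
  fun_prop

lemma Q3_zero_zero : Q3 0 0 = 139 := by
  norm_num [Q3, P31, P32, P33, P34, P35, P36]

lemma tendsto_Q3_mul_pow_div {α : Type*} {l : Filter α} {a ξ χ : α → ℝ} {c : ℝ}
    (ha : Tendsto a l (𝓝 0)) (hξ : Tendsto ξ l (𝓝 0)) (hχ : Tendsto χ l (𝓝 c)) :
    Tendsto (fun n => Q3 (a n) (ξ n) * χ n ^ 3 / (97200 * (1 + 2 * a n) ^ 9)) l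
      (𝓝 (139 * c ^ 3 / 97200)) := by
  have hQ : Tendsto (fun n => Q3 (a n) (ξ n)) l (𝓝 139) := by
    have := (continuous_Q3.tendsto (0, 0)).comp (ha.prodMk_nhds hξ)
    rwa [Q3_zero_zero] at this
  have hden : Tendsto (fun n => (97200 : ℝ) * (1 + 2 * a n) ^ 9) l (𝓝 (97200 * (1 + 2 * 0) ^ 9)) :=
    ((tendsto_const_nhds.add (ha.const_mul 2)).pow 9).const_mul 97200
  norm_num at hden
  exact (hQ.mul (hχ.pow 3)).div hden (by norm_num)

section SaddlePointEquation

variable {N r x L : ℝ}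

lemma mul_mul_exp_neg_eq (hL : L ≠ 0) (h : r * (exp r + x) = 2 * N * x * L) :
    N * (x * exp (-r)) = r * (1 + x * exp (-r)) / (2 * L) := by
  rw [eq_div_iff (by positivity), exp_neg]
  field_simp
  linear_combination -h

lemma log_eq_of_mul_exp_add_eq (hr : 0 < r) (hx : 0 < x) (hL : 0 < L)
    (h : r * (exp r + x) = 2 * N * x * L) :
    log N = log r + r + (log (1 + x * exp (-r)) - log (2 * x * L)) := by
  have hN : N = r * exp r * (1 + x * exp (-r)) / (2 * x * L) := by
    rw [eq_div_iff (by positivity), exp_neg]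
    field_simp
    linear_combination -h
  rw [hN, log_div (by positivity) (by positivity), log_mul (by positivity) (by positivity),
    log_mul (by positivity) (by positivity), log_exp]
  ring

end SaddlePointEquation

section SaddlePointSequence

variable {x : ℝ} {r : ℕ → ℝ}

lemma tendsto_atTop_of_saddlePoint (hx : 1 < x)
    (hr : ∀ᶠ n : ℕ in atTop, 0 < r n ∧ r n * (exp (r n) + x) = 2 * n * x * log x) :
    Tendsto r atTop atTop := by
  have hL : 0 < log x := log_pos hx
  refine tendsto_atTop_of_tendsto_mul_exp_add (x := x) (by linarith) <|
    (tendsto_natCast_atTop_atTop.atTop_mul_const (by positivity : 0 < 2 * x * log x)).congr' ?_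
  filter_upwards [hr] with n hn
  rw [hn.2]
  ring

lemma tendsto_natCast_mul_mul_exp_neg_atTop (hx : 1 < x)
    (hr : ∀ᶠ n : ℕ in atTop, 0 < r n ∧ r n * (exp (r n) + x) = 2 * n * x * log x) :
    Tendsto (fun n : ℕ => n * (x * exp (-r n))) atTop atTop := by
  have hL : 0 < log x := log_pos hx
  have hrtop := tendsto_atTop_of_saddlePoint hx hr
  refine (hrtop.atTop_mul_pos (by positivity)
    ((tendsto_one_add_mul_exp_neg x hrtop).div_const (2 * log x))).congr' ?_
  filter_upwards [hr] with n hn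
  rw [mul_mul_exp_neg_eq hL.ne' hn.2]
  ring

lemma tendsto_log_div_natCast_mul_mul_exp_neg (hx : 1 < x)
    (hr : ∀ᶠ n : ℕ in atTop, 0 < r n ∧ r n * (exp (r n) + x) = 2 * n * x * log x) :
    Tendsto (fun n : ℕ => log n / (n * (x * exp (-r n)))) atTop (𝓝 (2 * log x)) := by
  have hL : 0 < log x := log_pos hx
  have hrtop := tendsto_atTop_of_saddlePoint hx hr
  have hlam := tendsto_one_add_mul_exp_neg x hrtop
  have hu := (hlam.log one_ne_zero).sub_const (log (2 * x * log x))
  have hlim : Tendsto (fun n => 2 * log x / (1 + x * exp (-r n)) *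
      ((log (r n) + r n + (log (1 + x * exp (-r n)) - log (2 * x * log x))) / r n))
      atTop (𝓝 (2 * log x / 1 * 1)) :=
    (tendsto_const_nhds.div hlam one_ne_zero).mul (tendsto_log_add_self_add_div_self hrtop hu)
  rw [div_one, mul_one] at hlim
  refine hlim.congr' ?_
  filter_upwards [hr] with n hn
  rw [log_eq_of_mul_exp_add_eq hn.1 (by linarith) hL hn.2, mul_mul_exp_neg_eq hL.ne' hn.2]
  have : 0 < 1 + x * exp (-r n) := by positivity
  field_simp

end SaddlePointSequence

/-- For a real `x > 1`, with `r(n)` the unique positive solution of `t(e^t + x) = 2 n x log x`,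
`λ₀(n) = x e^{−r(n)}`, `a₀(n) = (1 + λ₀(n))²/(4 n λ₀(n) log x)`, `χ(n) = log n/(n λ₀(n))`, the
third steepest-descent coefficient `c₃₀(n) = Q₃(a₀(n), λ₀(n)) χ(n)³/(97200 (1 + 2 a₀(n))⁹)`
satisfies `c₃₀(n) → (139/12150)(log x)³` as `n → ∞`. -/
theorem c30_limit (x : ℝ) (hx : 1 < x) (r : ℕ → ℝ)
    (hr : ∀ n : ℕ, 1 ≤ n → 0 < r n ∧ r n * (Real.exp (r n) + x) = 2 * n * x * Real.log x)
    (lam0 a0 chi c30 : ℕ → ℝ)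
    (hlam : ∀ n : ℕ, lam0 n = x * Real.exp (-(r n)))
    (ha : ∀ n : ℕ, a0 n = (1 + lam0 n) ^ 2 / (4 * n * lam0 n * Real.log x))
    (hchi : ∀ n : ℕ, chi n = Real.log n / (n * lam0 n))
    (hc : ∀ n : ℕ, c30 n = Q3 (a0 n) (lam0 n) * (chi n) ^ 3 / (97200 * (1 + 2 * a0 n) ^ 9)) :
    Tendsto c30 atTop (nhds ((139 / 12150) * (Real.log x) ^ 3)) := by
  have hr' : ∀ᶠ n : ℕ in atTop, 0 < r n ∧ r n * (exp (r n) + x) = 2 * n * x * log x :=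
    eventually_atTop.2 ⟨1, hr⟩
  obtain rfl : lam0 = fun n => x * exp (-r n) := funext hlam
  have hrtop := tendsto_atTop_of_saddlePoint hx hr'
  have hlam0 : Tendsto (fun n => x * exp (-r n)) atTop (𝓝 0) := by
    simpa using (tendsto_exp_neg_atTop_nhds_zero.comp hrtop).const_mul x
  have ha0 : Tendsto a0 atTop (𝓝 0) := by
    have hden := (tendsto_natCast_mul_mul_exp_neg_atTop hx hr').atTop_mul_const
      (mul_pos four_pos (log_pos hx))
    refine (((tendsto_one_add_mul_exp_neg x hrtop).pow 2).div_atTop hden).congr fun n => ?_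
    rw [ha]
    ring
  have hchi0 : Tendsto chi atTop (𝓝 (2 * log x)) :=
    (tendsto_log_div_natCast_mul_mul_exp_neg hx hr').congr fun n => (hchi n).symm
  rw [show (139 : ℝ) / 12150 * log x ^ 3 = 139 * (2 * log x) ^ 3 / 97200 by ring]
  exact (tendsto_Q3_mul_pow_div ha0 hlam0 hchi0).congr fun n => (hc n).symm
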